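/- Let (f_i) be a K-frame for a Hilbert space H with bounds A, B, and let T be a bounded operator on H whose range is contained in the range of K. Then (f_i) is a T-frame for H; more precisely, there exists λ > 0 such that (A/λ²)‖T* f‖² ≤ Σ_i |⟨f, f_i⟩|² ≤ B‖f‖² for all f ∈ H. -/

import Mathlib

/-!
Douglas' lemma: restricted to `(ker K)ᗮ`, `K` is injective with the same range, so `T` lifts
through it to a linear `S` with `T = K S`, bounded by the closed graph theorem. Then
`T* = S* K*`, hence `‖T* g‖ ≤ λ ‖K* g‖` with `λ = ‖S‖ + 1`, and the lower `K`-frame bound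
`A ‖K* g‖² ≤ Σ |⟨g, f_i⟩|²` becomes the lower `T`-frame bound with constant `A / λ²`.
-/

open scoped Pointwise

noncomputable section

variable {H : Type*} [NormedAddCommGroup H] [InnerProductSpace ℂ H] [CompleteSpace H]

open Function

section

variable {𝕜 E F G : Type*} [RCLike 𝕜]
  [NormedAddCommGroup E] [NormedSpace 𝕜 E] [CompleteSpace E]
  [NormedAddCommGroup F] [NormedSpace 𝕜 F]
  [NormedAddCommGroup G] [NormedSpace 𝕜 G] [CompleteSpace G]

theorem LinearMap.continuous_of_injective_comp (S : G →ₗ[𝕜] E) {K : E →L[𝕜] F}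
    (hK : Injective K) (hKS : Continuous (K ∘ S)) : Continuous S := by
  refine S.continuous_of_isClosed_graph ?_
  have hgraph : (S.graph : Set (G × E)) = {p | K p.2 = K (S p.1)} := by
    ext p
    exact (LinearMap.mem_graph_iff S p).trans hK.eq_iff.symm
  rw [hgraph]
  exact isClosed_eq (by fun_prop) (hKS.comp continuous_fst)

end

namespace ContinuousLinearMap

variable {𝕜 E F G : Type*} [RCLike 𝕜]
  [NormedAddCommGroup E] [InnerProductSpace 𝕜 E] [CompleteSpace E]
  [NormedAddCommGroup F] [NormedSpace 𝕜 F]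
  [NormedAddCommGroup G] [NormedSpace 𝕜 G] [CompleteSpace G]

theorem exists_comp_eq_of_range_subset (K : E →L[𝕜] F) (T : G →L[𝕜] F)
    (h : Set.range T ⊆ Set.range K) : ∃ S : G →L[𝕜] E, K ∘L S = T := by
  set U := K.kerᗮ
  have hU : IsCompl K.ker U := Submodule.isCompl_orthogonal _
  set KU := K ∘L U.subtypeL
  have hinj : Injective KU := LinearMap.injective_domRestrict_iff.2 hU.disjoint.symm
  have hrange : KU.range = K.range :=
    (K.range_domRestrict U).trans (Submodule.map_eq_range_iff.2 hU.codisjoint.symm)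
  let S : G →ₗ[𝕜] U := (LinearEquiv.ofInjective (KU : U →ₗ[𝕜] F) hinj).symm.toLinearMap ∘ₗ
    (T : G →ₗ[𝕜] F).codRestrict _ (fun g => hrange ▸ h ⟨g, rfl⟩)
  have hKS : ∀ g, KU (S g) = T g := fun g =>
    congrArg Subtype.val ((LinearEquiv.ofInjective _ hinj).apply_symm_apply _)
  have hS : Continuous S := S.continuous_of_injective_comp hinj (by
    convert T.continuous using 1; ext g; exact hKS g)
  exact ⟨U.subtypeL ∘L ⟨S, hS⟩, ext hKS⟩

end ContinuousLinearMap

section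

variable {𝕜 E F G : Type*} [RCLike 𝕜]
  [NormedAddCommGroup E] [InnerProductSpace 𝕜 E] [CompleteSpace E]
  [NormedAddCommGroup F] [InnerProductSpace 𝕜 F] [CompleteSpace F]
  [NormedAddCommGroup G] [InnerProductSpace 𝕜 G] [CompleteSpace G]

open ContinuousLinearMap in
theorem ContinuousLinearMap.exists_norm_adjoint_le_of_range_subset (K : E →L[𝕜] F)
    (T : G →L[𝕜] F) (h : Set.range T ⊆ Set.range K) :
    ∃ lam : ℝ, 0 < lam ∧ ∀ y, ‖adjoint T y‖ ≤ lam * ‖adjoint K y‖ := by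
  obtain ⟨S, rfl⟩ := K.exists_comp_eq_of_range_subset T h
  refine ⟨‖S‖ + 1, by positivity, fun y => ?_⟩
  calc ‖adjoint (K ∘L S) y‖ = ‖adjoint S (adjoint K y)‖ := by rw [adjoint_comp]; rfl
    _ ≤ ‖adjoint S‖ * ‖adjoint K y‖ := le_opNorm _ _
    _ ≤ (‖S‖ + 1) * ‖adjoint K y‖ := by rw [adjoint.norm_map]; gcongr; linarith

end

theorem stmt4_general (K T : H →L[ℂ] H) (f : ℕ → H) (A B : ℝ) (hA : 0 < A)
    (hframe : ∀ g : H,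
      A * ‖ContinuousLinearMap.adjoint K g‖ ^ 2 ≤ ∑' i, ‖(inner ℂ g (f i) : ℂ)‖ ^ 2 ∧
      ∑' i, ‖(inner ℂ g (f i) : ℂ)‖ ^ 2 ≤ B * ‖g‖ ^ 2)
    (hrange : Set.range T ⊆ Set.range K) :
    ∃ lam : ℝ, 0 < lam ∧ ∀ g : H,
      (A / lam ^ 2) * ‖ContinuousLinearMap.adjoint T g‖ ^ 2
        ≤ ∑' i, ‖(inner ℂ g (f i) : ℂ)‖ ^ 2 ∧
      ∑' i, ‖(inner ℂ g (f i) : ℂ)‖ ^ 2 ≤ B * ‖g‖ ^ 2 := by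
  obtain ⟨lam, hlam, hmaj⟩ := K.exists_norm_adjoint_le_of_range_subset T hrange
  refine ⟨lam, hlam, fun g => ⟨?_, (hframe g).2⟩⟩
  calc A / lam ^ 2 * ‖ContinuousLinearMap.adjoint T g‖ ^ 2
      ≤ A / lam ^ 2 * (lam * ‖ContinuousLinearMap.adjoint K g‖) ^ 2 := by gcongr; exact hmaj g
    _ = A * ‖ContinuousLinearMap.adjoint K g‖ ^ 2 := by field_simp
    _ ≤ _ := (hframe g).1

theorem stmt4 (K T : H →L[ℂ] H) (f : ℕ → H) (A B : ℝ) (hA : 0 < A) (hAB : A ≤ B)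
    (hframe : ∀ g : H,
      A * ‖ContinuousLinearMap.adjoint K g‖ ^ 2 ≤ ∑' i, ‖(inner ℂ g (f i) : ℂ)‖ ^ 2 ∧
      ∑' i, ‖(inner ℂ g (f i) : ℂ)‖ ^ 2 ≤ B * ‖g‖ ^ 2)
    (hrange : Set.range T ⊆ Set.range K) :
    ∃ lam : ℝ, 0 < lam ∧ ∀ g : H,
      (A / lam ^ 2) * ‖ContinuousLinearMap.adjoint T g‖ ^ 2
        ≤ ∑' i, ‖(inner ℂ g (f i) : ℂ)‖ ^ 2 ∧
      ∑' i, ‖(inner ℂ g (f i) : ℂ)‖ ^ 2 ≤ B * ‖g‖ ^ 2 :=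
  stmt4_general K T f A B hA hframe hrange
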